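/- Define I_f(x) = x - f(x)/(a_n - a_1)² where f(x) = (∑_i a_i e^{x a_i})/(∑_i e^{x a_i}) - E, with a strictly increasing and a_1 < E < a_n. Then 0 < I_f′(x) < 1 for all x ∈ ℝ. -/

import Mathlib

/-!
Differentiating the Gibbs mean `t ↦ (∑ aᵢ e^{t aᵢ}) / (∑ e^{t aᵢ})` gives the variance of `a`
under the Gibbs weights `wᵢ = e^{x aᵢ}`, in the form `((∑ aᵢ² wᵢ)(∑ wᵢ) - (∑ aᵢ wᵢ)²) / (∑ wᵢ)²`.
By Lagrange's identity twice that numerator is `∑ᵢ ∑ⱼ (aᵢ - aⱼ)² wᵢ wⱼ`, which is positive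
because `a` is not constant and strictly below `(a_n - a_1)² (∑ wᵢ)²` because the diagonal
terms vanish. Hence `0 < f' < (a_n - a_1)²`, i.e. `0 < I_f' < 1`.
-/

open Finset

section
variable {ι : Type*} (s : Finset ι)

theorem Finset.sum_sum_sub_sq_mul_mul {R : Type*} [CommRing R] (a w : ι → R) :
    ∑ i ∈ s, ∑ j ∈ s, (a i - a j) ^ 2 * (w i * w j) =
      2 * ((∑ i ∈ s, a i ^ 2 * w i) * (∑ i ∈ s, w i) - (∑ i ∈ s, a i * w i) ^ 2) := by
  calc ∑ i ∈ s, ∑ j ∈ s, (a i - a j) ^ 2 * (w i * w j)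
      = ∑ i ∈ s, ∑ j ∈ s, (a i ^ 2 * w i * w j + a j ^ 2 * w j * w i
          - 2 * (a i * w i) * (a j * w j)) :=
        sum_congr rfl fun i _ => sum_congr rfl fun j _ => by ring
    _ = _ := by
        simp only [sum_add_distrib, sum_sub_distrib, ← mul_sum, ← sum_mul]
        ring

variable {s} {a w : ι → ℝ}

theorem sum_sq_mul_mul_sum_sub_sq_pos (hw : ∀ i ∈ s, 0 < w i) {i j : ι} (hi : i ∈ s)
    (hj : j ∈ s) (hij : a i ≠ a j) :
    0 < (∑ i ∈ s, a i ^ 2 * w i) * (∑ i ∈ s, w i) - (∑ i ∈ s, a i * w i) ^ 2 := by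
  have hpos : 0 < ∑ i ∈ s, ∑ j ∈ s, (a i - a j) ^ 2 * (w i * w j) := by
    refine sum_pos' (fun k hk => sum_nonneg fun l hl => ?_) ⟨i, hi, ?_⟩
    · have := hw k hk; have := hw l hl; positivity
    refine sum_pos' (fun l hl => ?_) ⟨j, hj, ?_⟩
    · have := hw i hi; have := hw l hl; positivity
    · have := hw i hi; have := hw j hj; have := sub_ne_zero.mpr hij; positivity
  rw [sum_sum_sub_sq_mul_mul] at hpos
  linarith

theorem sum_sq_mul_mul_sum_sub_sq_lt {m M : ℝ} (hw : ∀ i ∈ s, 0 < w i)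
    (ha : ∀ i ∈ s, a i ∈ Set.Icc m M) (hmM : m < M) (hs : s.Nonempty) :
    (∑ i ∈ s, a i ^ 2 * w i) * (∑ i ∈ s, w i) - (∑ i ∈ s, a i * w i) ^ 2
      < (M - m) ^ 2 * (∑ i ∈ s, w i) ^ 2 := by
  have hle : ∀ i ∈ s, ∀ j ∈ s, (a i - a j) ^ 2 * (w i * w j) ≤ (M - m) ^ 2 * (w i * w j) := by
    intro i hi j hj
    obtain ⟨hmi, hiM⟩ := ha i hi
    obtain ⟨hmj, hjM⟩ := ha j hj
    have := hw i hi; have := hw j hj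
    exact mul_le_mul_of_nonneg_right (by nlinarith) (by positivity)
  have hlt : ∑ i ∈ s, ∑ j ∈ s, (a i - a j) ^ 2 * (w i * w j)
      < ∑ i ∈ s, ∑ j ∈ s, (M - m) ^ 2 * (w i * w j) := by
    obtain ⟨k, hk⟩ := hs
    refine sum_lt_sum (fun i hi => sum_le_sum (hle i hi)) ⟨k, hk, ?_⟩
    refine sum_lt_sum (hle k hk) ⟨k, hk, ?_⟩
    have := hw k hk; have := sub_pos.mpr hmM
    rw [sub_self, zero_pow two_ne_zero, zero_mul]
    positivity
  simp only [sum_sum_sub_sq_mul_mul, ← mul_sum, ← sum_mul, ← sq] at hlt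
  have : 0 ≤ (M - m) ^ 2 * (∑ i ∈ s, w i) ^ 2 := by positivity
  linarith

end

section
variable {ι : Type*} (s : Finset ι) (a : ι → ℝ) (x : ℝ)

theorem hasDerivAt_sum_mul_exp_mul (c : ι → ℝ) :
    HasDerivAt (fun t => ∑ i ∈ s, c i * Real.exp (t * a i))
      (∑ i ∈ s, a i * c i * Real.exp (x * a i)) x :=
  HasDerivAt.fun_sum fun i _ =>
    ((hasDerivAt_mul_const (a i)).exp.const_mul (c i)).congr_deriv (by ring)

theorem hasDerivAt_sum_mul_exp_div_sum_exp {s} (hs : s.Nonempty) :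
    HasDerivAt (fun t => (∑ i ∈ s, a i * Real.exp (t * a i)) / ∑ i ∈ s, Real.exp (t * a i))
      (((∑ i ∈ s, a i ^ 2 * Real.exp (x * a i)) * (∑ i ∈ s, Real.exp (x * a i))
        - (∑ i ∈ s, a i * Real.exp (x * a i)) ^ 2) / (∑ i ∈ s, Real.exp (x * a i)) ^ 2) x := by
  have hnum := hasDerivAt_sum_mul_exp_mul s a x a
  have hden := hasDerivAt_sum_mul_exp_mul s a x 1
  simp only [Pi.one_apply, one_mul, mul_one] at hden
  have hpos : 0 < ∑ i ∈ s, Real.exp (x * a i) := sum_pos (fun i _ => Real.exp_pos _) hs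
  exact (hnum.fun_div hden hpos.ne').congr_deriv (by simp only [sq])

end

theorem deriv_If_bounds (n : ℕ) (hn : 2 ≤ n) (a : Fin n → ℝ)
    (ha : StrictMono a) (E : ℝ)
    (x : ℝ) :
    0 < deriv (fun t : ℝ => t -
        ((∑ i, a i * Real.exp (t * a i)) / (∑ i, Real.exp (t * a i)) - E) /
          (a ⟨n - 1, by omega⟩ - a ⟨0, by omega⟩) ^ 2) x ∧
    deriv (fun t : ℝ => t -
        ((∑ i, a i * Real.exp (t * a i)) / (∑ i, Real.exp (t * a i)) - E) /
          (a ⟨n - 1, by omega⟩ - a ⟨0, by omega⟩) ^ 2) x < 1 := by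
  set m := a ⟨0, by omega⟩
  set M := a ⟨n - 1, by omega⟩
  have hmM : m < M := ha (Fin.mk_lt_mk.mpr (by omega))
  have hbounds : ∀ i ∈ univ, a i ∈ Set.Icc m M := fun i _ =>
    ⟨ha.monotone (Fin.mk_le_of_le_val (Nat.zero_le _)),
      ha.monotone (Fin.le_def.mpr (Nat.le_sub_one_of_lt i.isLt))⟩
  have hne : (univ : Finset (Fin n)).Nonempty := univ_nonempty_iff.mpr ⟨⟨0, by omega⟩⟩
  have hw : ∀ i ∈ univ, 0 < Real.exp (x * a i) := fun i _ => Real.exp_pos _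
  have hS : 0 < (∑ i, Real.exp (x * a i)) ^ 2 := pow_pos (sum_pos hw hne) 2
  have hD : 0 < (M - m) ^ 2 := pow_pos (sub_pos.mpr hmM) 2
  set V := ((∑ i, a i ^ 2 * Real.exp (x * a i)) * (∑ i, Real.exp (x * a i))
    - (∑ i, a i * Real.exp (x * a i)) ^ 2) / (∑ i, Real.exp (x * a i)) ^ 2
  have hV_pos : 0 < V :=
    div_pos (sum_sq_mul_mul_sum_sub_sq_pos hw (mem_univ _) (mem_univ _) hmM.ne) hS
  have hV_lt : V < (M - m) ^ 2 :=
    (div_lt_iff₀ hS).mpr (sum_sq_mul_mul_sum_sub_sq_lt hw hbounds hmM hne)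
  have hderiv := (hasDerivAt_id' x).fun_sub
    (((hasDerivAt_sum_mul_exp_div_sum_exp a x hne).sub_const E).div_const ((M - m) ^ 2))
  rw [hderiv.deriv]
  have hVD : V / (M - m) ^ 2 < 1 := (div_lt_one hD).mpr hV_lt
  exact ⟨by linarith, by linarith [div_pos hV_pos hD]⟩
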